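/- Let n ≥ 3 be divisible by 3. In the wreath graph C_n[2K_1], the element t_1 = ∏_{j ≡ 1,2 (mod 3)} σ_j of the coordinate-swap group, together with its conjugates t_2 = ρ^{-1} t_1 ρ and t_3 = ρ^{-1} t_2 ρ, generates with the identity a subgroup T of order 4 isomorphic to the Klein four-group that is normalized by both ρ and μ. -/

import Mathlib

/-- The wreath graph `C_n[2K_1]`. -/
def wreath (n : ℕ) : SimpleGraph (ZMod n × Fin 2) where
  Adj u v := u ≠ v ∧ (v.1 = u.1 + 1 ∨ u.1 = v.1 + 1)
  symm := ⟨by rintro u v ⟨h1, h2⟩; exact ⟨h1.symm, h2.symm⟩⟩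
  loopless := ⟨by rintro u ⟨h, _⟩; exact h rfl⟩

/-- The rotation `ρ : (i,s) ↦ (i+1,s)`. -/
def wRho (n : ℕ) : Equiv.Perm (ZMod n × Fin 2) :=
  Equiv.prodCongr (Equiv.addRight 1) (Equiv.refl _)

/-- The reflection `μ : (i,s) ↦ (-i,s)`. -/
def wMu (n : ℕ) : Equiv.Perm (ZMod n × Fin 2) :=
  Equiv.prodCongr (Equiv.neg (ZMod n)) (Equiv.refl _)

/-- The underlying function of `t₁ = ∏_{j ≡ 1,2 (mod 3)} σ_j`: it swaps `(j,0)`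
and `(j,1)` for every `j` not divisible by `3` and fixes everything else. -/
def t1fun (n : ℕ) : ZMod n × Fin 2 → ZMod n × Fin 2 :=
  fun p => if p.1.val % 3 ≠ 0 then (p.1, 1 - p.2) else p

lemma t1fun_involutive (n : ℕ) : Function.Involutive (t1fun n) := by
  intro p
  unfold t1fun
  by_cases h : p.1.val % 3 ≠ 0 <;> simp [h]

/-- `t₁ = ∏_{j ≡ 1,2 (mod 3)} σ_j` as a permutation. -/
def t1perm (n : ℕ) : Equiv.Perm (ZMod n × Fin 2) :=
  (t1fun_involutive n).toPerm

/-- The subgroup `T = ⟨t₁, t₂, t₃⟩` where `t₂ = ρ⁻¹ t₁ ρ` and `t₃ = ρ⁻¹ t₂ ρ`. -/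
def T16 (n : ℕ) : Subgroup (Equiv.Perm (ZMod n × Fin 2)) :=
  Subgroup.closure
    {t1perm n, (wRho n)⁻¹ * t1perm n * wRho n,
     (wRho n)⁻¹ * ((wRho n)⁻¹ * t1perm n * wRho n) * wRho n}
/-!
When `3 ∣ n`, each `tₖ` adds to the `Fin 2`-coordinate of `(j, s)` a value depending only on
`j mod 3`. Hence `T` is the injective image of a group of functions `ZMod 3 → Fin 2` under
`g ↦ ((j, s) ↦ (j, g (j mod 3) + s))`, and `t₁, t₂, t₃` correspond to the three words of weight
two, which generate the even-weight code of length three: a Klein four-group. Conjugation by `ρ`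
or `μ` precomposes `g` with a permutation of `ZMod 3`, which preserves the even-weight code.
-/

open Equiv Function Multiplicative

section FiberShift

variable {α β G : Type*} [AddGroup G] (π : α → β)

def fiberShift : Multiplicative (β → G) →* Perm (α × G) where
  toFun g := (Equiv.refl α).prodShear fun a => Equiv.addLeft (g.toAdd (π a))
  map_one' := by ext <;> simp
  map_mul' g h := by ext <;> simp

@[simp]
lemma fiberShift_apply (g : Multiplicative (β → G)) (p : α × G) :
    fiberShift π g p = (p.1, g.toAdd (π p.1) + p.2) := rfl

lemma fiberShift_injective (hπ : Surjective π) : Injective (fiberShift (G := G) π) := by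
  refine (injective_iff_map_eq_one _).2 fun g hg => ?_
  ext b
  obtain ⟨a, rfl⟩ := hπ b
  simpa using congr_arg Prod.snd (Equiv.ext_iff.1 hg (a, 0))

variable {π} {e : Perm α} {e' : Perm β}

lemma prodCongr_inv_mul_fiberShift_mul (h : Semiconj π e e') (g : Multiplicative (β → G)) :
    (e.prodCongr (Equiv.refl G))⁻¹ * fiberShift π g * e.prodCongr (Equiv.refl G) =
      fiberShift π (ofAdd (g.toAdd ∘ e')) := by
  ext p
  · simp [Perm.mul_apply]
  · simp [Perm.mul_apply, h p.1]

lemma prodCongr_mul_fiberShift_mul_inv (h : Semiconj π e e') (g : Multiplicative (β → G)) :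
    e.prodCongr (Equiv.refl G) * fiberShift π g * (e.prodCongr (Equiv.refl G))⁻¹ =
      fiberShift π (ofAdd (g.toAdd ∘ ⇑e'⁻¹)) :=
  prodCongr_inv_mul_fiberShift_mul
    (h.inverses_right e.apply_symm_apply e'.symm_apply_apply) g

end FiberShift

section SumZero

variable (α G : Type*) [Fintype α] [AddCommGroup G]

def sumZeroSubgroup : Subgroup (Multiplicative (α → G)) where
  carrier := {g | ∑ a, g.toAdd a = 0}
  mul_mem' {g h} hg hh := by simp_all [Finset.sum_add_distrib]
  one_mem' := by simp
  inv_mem' hg := by simp_all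

variable {α G}

@[simp]
lemma mem_sumZeroSubgroup {g : Multiplicative (α → G)} :
    g ∈ sumZeroSubgroup α G ↔ ∑ a, g.toAdd a = 0 := Iff.rfl

lemma comp_mem_sumZeroSubgroup {g : Multiplicative (α → G)} (hg : g ∈ sumZeroSubgroup α G)
    (e : Perm α) : ofAdd (g.toAdd ∘ e) ∈ sumZeroSubgroup α G := by
  simpa [Equiv.sum_comp e g.toAdd] using hg

end SumZero

instance : DecidablePred (· ∈ sumZeroSubgroup (ZMod 3) (Fin 2)) :=
  fun _ => decidable_of_iff _ mem_sumZeroSubgroup.symm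

lemma card_sumZeroSubgroup : Nat.card (sumZeroSubgroup (ZMod 3) (Fin 2)) = 4 := by
  rw [Nat.card_eq_fintype_card]; decide

instance : IsKleinFour (sumZeroSubgroup (ZMod 3) (Fin 2)) where
  card_four := card_sumZeroSubgroup
  exponent_two := by
    have : Nontrivial (sumZeroSubgroup (ZMod 3) (Fin 2)) :=
      Finite.one_lt_card_iff_nontrivial.1 (by rw [card_sumZeroSubgroup]; norm_num)
    have hdvd : Monoid.exponent (sumZeroSubgroup (ZMod 3) (Fin 2)) ∣ 2 :=
      Monoid.exponent_dvd_of_forall_pow_eq_one fun g => by decide +revert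
    have hlt := Monoid.one_lt_exponent (G := sumZeroSubgroup (ZMod 3) (Fin 2))
    have hle := Nat.le_of_dvd two_pos hdvd
    omega

def nonzeroIndicator (r : ZMod 3) : Fin 2 := if r = 0 then 0 else 1

lemma closure_shifts_nonzeroIndicator :
    Subgroup.closure {ofAdd nonzeroIndicator, ofAdd (nonzeroIndicator ∘ Equiv.addRight 1),
      ofAdd ((nonzeroIndicator ∘ Equiv.addRight 1) ∘ Equiv.addRight 1)} =
      sumZeroSubgroup (ZMod 3) (Fin 2) := by
  refine le_antisymm ?_ fun g hg => ?_
  · simp only [Subgroup.closure_le, Set.insert_subset_iff, Set.singleton_subset_iff,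
      SetLike.mem_coe, mem_sumZeroSubgroup]
    decide
  · have : g = 1 ∨ g = ofAdd nonzeroIndicator ∨ g = ofAdd (nonzeroIndicator ∘ Equiv.addRight 1) ∨
        g = ofAdd ((nonzeroIndicator ∘ Equiv.addRight 1) ∘ Equiv.addRight 1) := by
      revert g; decide
    rcases this with rfl | hg | hg | hg
    · exact one_mem _
    all_goals exact Subgroup.subset_closure (by simp [hg])

lemma dvd_val_iff_castHom_eq_zero {m n : ℕ} (h : m ∣ n) (j : ZMod n) :
    m ∣ j.val ↔ ZMod.castHom h (ZMod m) j = 0 := by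
  rcases eq_or_ne n 0 with rfl | hn
  · -- `ZMod 0` is `ℤ`, on which `val` is `Int.natAbs`.
    exact Int.natCast_dvd.symm.trans (ZMod.intCast_zmod_eq_zero_iff_dvd j m).symm
  · have : NeZero n := ⟨hn⟩
    rw [ZMod.castHom_apply, ZMod.cast_eq_val, ZMod.natCast_eq_zero_iff]

lemma semiconj_castHom_addRight_one {m n : ℕ} (h : m ∣ n) :
    Semiconj (ZMod.castHom h (ZMod m)) (Equiv.addRight 1) (Equiv.addRight 1) :=
  fun j => by simp only [coe_addRight, map_add, map_one]

section Wreath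

variable {n : ℕ} (h3 : 3 ∣ n)

lemma t1perm_eq_fiberShift :
    t1perm n = fiberShift (ZMod.castHom h3 (ZMod 3)) (ofAdd nonzeroIndicator) := by
  refine Equiv.ext fun p => Prod.ext ?_ ?_
  · simp only [t1perm, t1fun, Involutive.coe_toPerm]
    split_ifs <;> rfl
  · simp only [t1perm, t1fun, Involutive.coe_toPerm, fiberShift_apply, toAdd_ofAdd,
      nonzeroIndicator, ← dvd_val_iff_castHom_eq_zero h3, Nat.dvd_iff_mod_eq_zero]
    split_ifs <;> grind

lemma wRho_inv_mul_fiberShift_mul (g : Multiplicative (ZMod 3 → Fin 2)) :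
    (wRho n)⁻¹ * fiberShift (ZMod.castHom h3 (ZMod 3)) g * wRho n =
      fiberShift (ZMod.castHom h3 (ZMod 3)) (ofAdd (g.toAdd ∘ Equiv.addRight 1)) :=
  prodCongr_inv_mul_fiberShift_mul (semiconj_castHom_addRight_one h3) g

lemma wRho_mul_fiberShift_mul_inv (g : Multiplicative (ZMod 3 → Fin 2)) :
    wRho n * fiberShift (ZMod.castHom h3 (ZMod 3)) g * (wRho n)⁻¹ =
      fiberShift (ZMod.castHom h3 (ZMod 3)) (ofAdd (g.toAdd ∘ ⇑(Equiv.addRight 1)⁻¹)) :=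
  prodCongr_mul_fiberShift_mul_inv (semiconj_castHom_addRight_one h3) g

lemma wMu_mul_fiberShift_mul_inv (g : Multiplicative (ZMod 3 → Fin 2)) :
    wMu n * fiberShift (ZMod.castHom h3 (ZMod 3)) g * (wMu n)⁻¹ =
      fiberShift (ZMod.castHom h3 (ZMod 3)) (ofAdd (g.toAdd ∘ ⇑(Equiv.neg (ZMod 3))⁻¹)) :=
  prodCongr_mul_fiberShift_mul_inv (e := Equiv.neg _) (e' := Equiv.neg _)
    (map_neg (ZMod.castHom h3 (ZMod 3))) g

lemma T16_eq_map :
    T16 n = (sumZeroSubgroup (ZMod 3) (Fin 2)).map (fiberShift (ZMod.castHom h3 (ZMod 3))) := by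
  rw [T16, t1perm_eq_fiberShift h3, wRho_inv_mul_fiberShift_mul h3,
    wRho_inv_mul_fiberShift_mul h3, ← closure_shifts_nonzeroIndicator, MonoidHom.map_closure]
  simp only [toAdd_ofAdd, Set.image_insert_eq, Set.image_singleton]

end Wreath

theorem stmt_16_general (n : ℕ) (h3 : 3 ∣ n) :
    Nat.card (T16 n) = 4 ∧
    Nonempty (T16 n ≃* Multiplicative (ZMod 2 × ZMod 2)) ∧
    (∀ x ∈ T16 n, wRho n * x * (wRho n)⁻¹ ∈ T16 n ∧
      wMu n * x * (wMu n)⁻¹ ∈ T16 n) := by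
  have hT := T16_eq_map h3
  have hinj : Injective (fiberShift (G := Fin 2) (ZMod.castHom h3 (ZMod 3))) :=
    fiberShift_injective _ (ZMod.ringHom_surjective _)
  let e : T16 n ≃* sumZeroSubgroup (ZMod 3) (Fin 2) :=
    (MulEquiv.subgroupCongr hT).trans (Subgroup.equivMapOfInjective _ _ hinj).symm
  obtain ⟨f⟩ := IsKleinFour.nonempty_mulEquiv (G₁ := sumZeroSubgroup (ZMod 3) (Fin 2))
    (G₂ := Multiplicative (ZMod 2 × ZMod 2))
  refine ⟨(Nat.card_congr e.toEquiv).trans card_sumZeroSubgroup, ⟨e.trans f⟩, ?_⟩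
  rw [hT]
  rintro _ ⟨g, hg, rfl⟩
  exact ⟨⟨_, comp_mem_sumZeroSubgroup hg _, (wRho_mul_fiberShift_mul_inv h3 g).symm⟩,
    ⟨_, comp_mem_sumZeroSubgroup hg _, (wMu_mul_fiberShift_mul_inv h3 g).symm⟩⟩

theorem stmt_16 (n : ℕ) (hn : 3 ≤ n) (h3 : 3 ∣ n) :
    Nat.card (T16 n) = 4 ∧
    Nonempty (T16 n ≃* Multiplicative (ZMod 2 × ZMod 2)) ∧
    (∀ x ∈ T16 n, wRho n * x * (wRho n)⁻¹ ∈ T16 n ∧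
      wMu n * x * (wMu n)⁻¹ ∈ T16 n) :=
  stmt_16_general n h3
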